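/- arXiv:0905.3816 — 2 statements merged into one kernel-verified Lean document; each statement's English description precedes it below -/
import Mathlib

section
/- For integers n > 1 and 1 ≤ k ≤ n-1, the congruence [2k-1 choose k]_q ≡ (-1)^k q^{(3k²-k)/2} [n-k choose k]_q holds modulo Φ_n(q). -/
/-!
Clearing denominators in the product formula
`[m, k]_q · ∏_{i<k} (q^{i+1} - 1) = ∏_{i<k} (q^{m-i} - 1)` reduces the congruence, evaluated at a
primitive `n`-th root of unity `ζ` (where the denominator does not vanish since `k < n`), to an
identity between the numerators. Since `ζ^n = 1`, each factor `ζ^j - 1` of the left numerator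
equals `-ζ^j (ζ^{n-j} - 1)`, and the exponents `n - j` for `j = 2k-1-i` run through those of the
right numerator in reverse order; the monomials collect to `(-1)^k ζ^{(3k²-k)/2}`. When `2k-1 > n`
both numerators contain a vanishing factor.
-/

open Polynomial Finset

/-- The Gaussian (q-)binomial coefficient as a polynomial in `ℤ[q]`
(via the standard Pascal recursion `[n+1,k+1] = [n,k] + q^(k+1)·[n,k+1]`). -/
noncomputable def gbinom : ℕ → ℕ → Polynomial ℤ
  | _, 0 => 1
  | 0, _ + 1 => 0
  | n + 1, k + 1 => gbinom n k + Polynomial.X ^ (k + 1) * gbinom n (k + 1)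

lemma gbinom_eq_zero_of_lt : ∀ {m k : ℕ}, m < k → gbinom m k = 0
  | 0, _ + 1, _ => rfl
  | m + 1, k + 1, h => by
    rw [gbinom, gbinom_eq_zero_of_lt (by omega : m < k), gbinom_eq_zero_of_lt (by omega : m < k + 1)]
    ring

lemma prod_range_pow_sub_sub_one_eq_zero {R : Type*} [CommRing R] (a : R) {m k : ℕ} (h : m < k) :
    ∏ i ∈ range k, (a ^ (m - i) - 1) = 0 :=
  prod_eq_zero (mem_range.2 h) (by simp)

lemma gbinom_mul_prod_X_pow_sub_one : ∀ m k : ℕ,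
    gbinom m k * ∏ i ∈ range k, (X ^ (i + 1) - 1) = ∏ i ∈ range k, (X ^ (m - i) - 1 : ℤ[X])
  | _, 0 => by simp [gbinom]
  | 0, k + 1 => by simp [gbinom]
  | m + 1, k + 1 => by
    rcases lt_or_ge m k with hmk | hkm
    · rw [gbinom_eq_zero_of_lt (by omega), zero_mul,
        prod_range_pow_sub_sub_one_eq_zero (X : ℤ[X]) (by omega)]
    have ih := gbinom_mul_prod_X_pow_sub_one m k
    have ih' := gbinom_mul_prod_X_pow_sub_one m (k + 1)
    rw [prod_range_succ (fun i => X ^ (i + 1) - 1), prod_range_succ (fun i => X ^ (m - i) - 1),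
      ← ih] at ih'
    have hX : (X : ℤ[X]) ^ (k + 1) * X ^ (m - k) = X ^ (m + 1) := by
      rw [← pow_add]; congr 1; omega
    rw [gbinom, prod_range_succ (fun i => X ^ (i + 1) - 1),
      prod_range_succ' (fun i => X ^ (m + 1 - i) - 1)]
    simp only [Nat.add_sub_add_right, Nat.sub_zero]
    rw [← ih]
    linear_combination X ^ (k + 1) * ih' + gbinom m k * (∏ i ∈ range k, (X ^ (i + 1) - 1)) * hX

lemma aeval_gbinom_mul_prod {A : Type*} [CommRing A] (ζ : A) (m k : ℕ) :
    aeval ζ (gbinom m k) * ∏ i ∈ range k, (ζ ^ (i + 1) - 1) = ∏ i ∈ range k, (ζ ^ (m - i) - 1) := by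
  simpa using congrArg (aeval ζ) (gbinom_mul_prod_X_pow_sub_one m k)

lemma sum_range_two_mul_sub_one_sub (k : ℕ) :
    ∑ i ∈ range k, (2 * k - 1 - i) = (3 * k ^ 2 - k) / 2 := by
  have hreflect : ∑ i ∈ range k, (2 * k - 1 - i) = ∑ i ∈ range k, (k + i) := by
    rw [← sum_range_reflect]
    exact sum_congr rfl fun i hi => by have := mem_range.1 hi; omega
  have hgauss := sum_range_id_mul_two k
  have hsq : k * (k - 1) + k = k * k := by cases k <;> simp [Nat.mul_succ]
  rw [hreflect, sum_add_distrib, sum_const, card_range, smul_eq_mul, sq]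
  omega

lemma pow_sub_one_eq_neg_pow_mul_of_pow_eq_one {A : Type*} [CommRing A] {ζ : A} {n j : ℕ}
    (hζ : ζ ^ n = 1) (hj : j ≤ n) : ζ ^ j - 1 = -ζ ^ j * (ζ ^ (n - j) - 1) := by
  have h : ζ ^ j * ζ ^ (n - j) = 1 := by rw [← pow_add, Nat.add_sub_cancel' hj, hζ]
  linear_combination h

lemma prod_range_pow_sub_one_of_pow_eq_one {A : Type*} [CommRing A] {ζ : A} {n k : ℕ}
    (hζ : ζ ^ n = 1) (hk : k ≤ n) :
    ∏ i ∈ range k, (ζ ^ (2 * k - 1 - i) - 1) =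
      (-1) ^ k * ζ ^ ((3 * k ^ 2 - k) / 2) * ∏ i ∈ range k, (ζ ^ (n - k - i) - 1) := by
  rcases le_or_gt (2 * k - 1) n with h | h
  · have hfactor : ∀ i ∈ range k, ζ ^ (2 * k - 1 - i) - 1 =
        -ζ ^ (2 * k - 1 - i) * (ζ ^ (n - k - (k - 1 - i)) - 1) := fun i hi => by
      rw [pow_sub_one_eq_neg_pow_mul_of_pow_eq_one hζ (by omega)]
      congr 3
      have := mem_range.1 hi
      omega
    rw [prod_congr rfl hfactor, prod_mul_distrib, prod_neg, card_range, prod_pow_eq_pow_sum,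
      sum_range_two_mul_sub_one_sub, prod_range_reflect (fun i => ζ ^ (n - k - i) - 1)]
  · have hleft : ∏ i ∈ range k, (ζ ^ (2 * k - 1 - i) - 1) = 0 := by
      refine prod_eq_zero (i := 2 * k - 1 - n) (mem_range.2 (by omega)) ?_
      rw [show 2 * k - 1 - (2 * k - 1 - n) = n by omega, hζ, sub_self]
    rw [hleft, prod_range_pow_sub_sub_one_eq_zero ζ (by omega), mul_zero]

theorem stmt_3_general (n k : ℕ) (hk2 : k ≤ n - 1) :
    Polynomial.cyclotomic n ℤ ∣
      (gbinom (2 * k - 1) k -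
        (-1) ^ k * Polynomial.X ^ ((3 * k ^ 2 - k) / 2) * gbinom (n - k) k) := by
  rcases Nat.eq_zero_or_pos n with rfl | hn
  · simp
  obtain ⟨ζ, hζ⟩ : ∃ ζ : ℂ, IsPrimitiveRoot ζ n := ⟨_, Complex.isPrimitiveRoot_exp n hn.ne'⟩
  have hden : ∏ i ∈ range k, (ζ ^ (i + 1) - 1) ≠ 0 :=
    prod_ne_zero_iff.2 fun i hi =>
      sub_ne_zero.2 (hζ.pow_ne_one_of_pos_of_lt i.succ_ne_zero (by have := mem_range.1 hi; omega))
  rw [cyclotomic_eq_minpoly hζ hn]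
  apply minpoly.isIntegrallyClosed_dvd (hζ.isIntegral hn)
  rw [map_sub, map_mul, map_mul, map_pow, map_pow, aeval_X, map_neg, map_one, sub_eq_zero]
  apply mul_right_cancel₀ hden
  rw [aeval_gbinom_mul_prod, mul_assoc, aeval_gbinom_mul_prod]
  exact prod_range_pow_sub_one_of_pow_eq_one hζ.pow_eq_one (by omega)

/-- For `n > 1` and `1 ≤ k ≤ n-1`:
`[2k-1, k]_q ≡ (-1)^k q^((3k²-k)/2) [n-k, k]_q (mod Φ_n(q))`. -/
theorem stmt_3 (n k : ℕ) (hn : 1 < n) (hk1 : 1 ≤ k) (hk2 : k ≤ n - 1) :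
    Polynomial.cyclotomic n ℤ ∣
      (gbinom (2 * k - 1) k -
        (-1) ^ k * Polynomial.X ^ ((3 * k ^ 2 - k) / 2) * gbinom (n - k) k) :=
  stmt_3_general n k hk2
end

section
/- For every nonnegative integer n, the alternating sum ∑_{k≥0} (-1)^k q^{k(k-1)/2} [n-k choose k]_q equals 0 if n ≡ 2 (mod 3), equals (-1)^n q^{n(n-1)/6} if n ≡ 0 (mod 3), and equals -(-1)^n q^{n(n-1)/6} if n ≡ 1 (mod 3). -/
open Polynomial Finset

lemma gbinom_zero_right (n : ℕ) : gbinom n 0 = 1 := by cases n <;> rfl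

lemma gbinom_of_lt : ∀ {n k : ℕ}, n < k → gbinom n k = 0
  | 0, _+1, _ => rfl
  | n+1, k+1, h => by
      rw [gbinom, gbinom_of_lt (show n < k by omega), gbinom_of_lt (show n < k+1 by omega)]
      ring

lemma gbinom_self : ∀ n, gbinom n n = 1
  | 0 => rfl
  | n+1 => by
      rw [gbinom, gbinom_self n, gbinom_of_lt (show n < n+1 by omega)]; ring

lemma gbinom_one_right (n : ℕ) : gbinom n 1 = ∑ i ∈ range n, (X : Polynomial ℤ) ^ i := by
  induction n with
  | zero => simp [gbinom_of_lt]
  | succ n ih =>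
      rw [gbinom, ih, gbinom_zero_right, Finset.sum_range_succ', Finset.mul_sum]
      simp [pow_succ, mul_comm, add_comm]

lemma gbinom_pascal₂ : ∀ n k, gbinom (n+1) (k+1) =
    X ^ (n - k) * gbinom n k + gbinom n (k+1) := by
  intro n
  induction n with
  | zero =>
      intro k
      cases k with
      | zero => simp [gbinom, gbinom_zero_right]
      | succ j =>
          rw [gbinom_of_lt (show 0+1 < j+1+1 by omega),
            gbinom_of_lt (show 0 < j+1 by omega), gbinom_of_lt (show 0 < j+1+1 by omega)]
          ring
  | succ n ih =>
      intro k
      cases k with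
      | zero =>
          have e1 : gbinom (n+1+1) (0+1) = gbinom (n+1) 0 + X^(0+1) * gbinom (n+1) 1 := rfl
          rw [e1, gbinom_zero_right]
          simp only [zero_add, Nat.sub_zero]
          rw [gbinom_one_right]
          rw [Finset.mul_sum]
          simp only [← pow_add, Nat.add_comm 1]
          rw [Finset.sum_range_succ (fun i => (X:Polynomial ℤ)^(i+1)) n,
            Finset.sum_range_succ' (fun i => (X:Polynomial ℤ)^i) n]
          ring
      | succ j =>
          by_cases hj : j + 1 ≤ n
          · have e1 : gbinom (n+1+1) (j+1+1) = gbinom (n+1) (j+1) + X^(j+1+1) * gbinom (n+1) (j+1+1) := rfl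
            have e2 : gbinom (n+1) (j+1) = gbinom n j + X^(j+1) * gbinom n (j+1) := rfl
            have e3 : gbinom (n+1) (j+1+1) = gbinom n (j+1) + X^(j+1+1) * gbinom n (j+1+1) := rfl
            calc gbinom (n+1+1) (j+1+1)
                = (X^(n-j) * gbinom n j + gbinom n (j+1)) +
                  X^(j+1+1) * (X^(n-(j+1)) * gbinom n (j+1) + gbinom n (j+1+1)) := by
                  rw [e1, ih j, ih (j+1)]
              _ = X^(n+1-(j+1)) * gbinom (n+1) (j+1) + gbinom (n+1) (j+1+1) := by
                  rw [e2, e3, show n+1-(j+1) = n-j by omega]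
                  have h1 : (X:Polynomial ℤ)^(j+1+1) * X^(n-(j+1)) = X^(n-j) * X^(j+1) := by
                    rw [← pow_add, ← pow_add]; congr 1; omega
                  linear_combination h1 * gbinom n (j+1)
          · rcases eq_or_lt_of_le (show n ≤ j by omega) with h|h
            · subst h
              rw [gbinom_self, gbinom_self, gbinom_of_lt (show n+1 < n+1+1 by omega)]
              simp
            · rw [gbinom_of_lt (show n+1+1 < j+1+1 by omega),
                gbinom_of_lt (show n+1 < j+1 by omega),
                gbinom_of_lt (show n+1 < j+1+1 by omega)]
              ring

noncomputable def Ssum (n : ℕ) : Polynomial ℤ :=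
  ∑ k ∈ Finset.range (n+1), (-1:Polynomial ℤ)^k * X^(k*(k-1)/2) * gbinom (n-k) k

noncomputable def Asum (n : ℕ) : Polynomial ℤ :=
  ∑ k ∈ Finset.range (n+1), (-1:Polynomial ℤ)^k * X^(k*(k+1)/2) * gbinom (n-k) k

lemma term1 (n k : ℕ) (hk : k ≤ n) :
    (-1:Polynomial ℤ)^(k+1) * X^((k+1)*(k+1-1)/2) * gbinom (n+2-(k+1)) (k+1)
    = (-1:Polynomial ℤ)^(k+1) * X^((k+1)*(k+1+1)/2) * gbinom (n+1-(k+1)) (k+1)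
      - (-1:Polynomial ℤ)^k * X^(k*(k+1)/2) * gbinom (n-k) k := by
  rw [show n+2-(k+1) = (n-k)+1 by omega, show n+1-(k+1) = n-k by omega,
    show (k+1)*(k+1-1)/2 = k*(k+1)/2 by rw [Nat.add_sub_cancel, Nat.mul_comm],
    show gbinom ((n-k)+1) (k+1) = gbinom (n-k) k + X^(k+1) * gbinom (n-k) (k+1) from rfl]
  have hX : (X:Polynomial ℤ)^(k*(k+1)/2) * X^(k+1) = X^((k+1)*(k+1+1)/2) := by
    rw [← pow_add]; congr 1
    obtain ⟨c, hc⟩ := Nat.even_mul_succ_self k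
    have h1 : (k+1)*(k+1+1) = k*(k+1) + 2*(k+1) := by ring
    omega
  have hs : (-1:Polynomial ℤ)^(k+1) = -(-1)^k := by rw [pow_succ]; ring
  rw [hs]
  linear_combination (-(-1:Polynomial ℤ)^k * gbinom (n-k) (k+1)) * hX

lemma step1 (n : ℕ) : Ssum (n+2) = Asum (n+1) - Asum n := by
  have hlast : gbinom (n+2-(n+2)) (n+2) = 0 := by
    rw [Nat.sub_self]; exact gbinom_of_lt (Nat.succ_pos _)
  rw [Ssum, Finset.sum_range_succ, hlast, mul_zero, add_zero, Finset.sum_range_succ',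
    Asum, Asum,
    Finset.sum_range_succ' (fun k => (-1:Polynomial ℤ)^k * X^(k*(k+1)/2) * gbinom (n+1-k) k) (n+1)]
  rw [Finset.sum_congr rfl
    (fun k hk => term1 n k (Nat.lt_succ_iff.mp (Finset.mem_range.mp hk)))]
  rw [Finset.sum_sub_distrib]
  simp [gbinom_zero_right]
  ring

lemma term2 (n k : ℕ) (hk : k ≤ n) :
    (-1:Polynomial ℤ)^(k+1) * X^((k+1)*(k+1+1)/2) * gbinom (n+2-(k+1)) (k+1)
    = (-1:Polynomial ℤ)^(k+1) * X^((k+1)*(k+1+1)/2) * gbinom (n+1-(k+1)) (k+1)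
      - X^(n+1) * ((-1:Polynomial ℤ)^k * X^(k*(k-1)/2) * gbinom (n-k) k) := by
  rw [show n+2-(k+1) = (n-k)+1 by omega, show n+1-(k+1) = n-k by omega,
    gbinom_pascal₂ (n-k) k]
  have hs : (-1:Polynomial ℤ)^(k+1) = -(-1)^k := by rw [pow_succ]; ring
  by_cases h2 : 2*k ≤ n
  · have hX : (X:Polynomial ℤ)^((k+1)*(k+1+1)/2) * X^(n-k-k)
        = X^(n+1) * X^(k*(k-1)/2) := by
      rw [← pow_add, ← pow_add]; congr 1
      have h1 : (k+1)*(k+1+1) = k*(k-1) + (4*k+2) := by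
        cases k with
        | zero => norm_num
        | succ j => simp only [Nat.add_sub_cancel]; ring
      have h2' : 2 ∣ k*(k-1) := by
        cases k with
        | zero => simp
        | succ j =>
            obtain ⟨c, hc⟩ := Nat.even_mul_succ_self j
            have : (j+1)*(j+1-1) = j*(j+1) := by
              simp only [Nat.add_sub_cancel]; ring
            omega
      omega
    rw [hs]
    linear_combination (-(-1:Polynomial ℤ)^k * gbinom (n-k) k) * hX
  · rw [gbinom_of_lt (show n-k < k by omega)]
    ring

lemma step2 (n : ℕ) : Asum (n+2) = Asum (n+1) - X^(n+1) * Ssum n := by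
  have hlast : gbinom (n+2-(n+2)) (n+2) = 0 := by
    rw [Nat.sub_self]; exact gbinom_of_lt (Nat.succ_pos _)
  rw [Asum, Finset.sum_range_succ, hlast, mul_zero, add_zero, Finset.sum_range_succ',
    Asum,
    Finset.sum_range_succ' (fun k => (-1:Polynomial ℤ)^k * X^(k*(k+1)/2) * gbinom (n+1-k) k) (n+1),
    Ssum, Finset.mul_sum]
  rw [Finset.sum_congr rfl
    (fun k hk => term2 n k (Nat.lt_succ_iff.mp (Finset.mem_range.mp hk)))]
  rw [Finset.sum_sub_distrib]
  simp [gbinom_zero_right]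
  ring

lemma step3 (n : ℕ) : Ssum (n+3) = -(X^(n+1) * Ssum n) := by
  have h1 : Ssum (n+1+2) = Asum (n+2) - Asum (n+1) := step1 (n+1)
  rw [show n+3 = n+1+2 from rfl, h1, step2 n]
  ring

lemma Ssum_zero : Ssum 0 = 1 := by
  simp [Ssum, gbinom_zero_right]

lemma Ssum_one : Ssum 1 = 1 := by
  rw [Ssum, Finset.sum_range_succ, Finset.sum_range_succ, Finset.sum_range_zero,
    gbinom_of_lt (show 1-1 < 1 by omega)]
  simp [gbinom_zero_right]

lemma Ssum_two : Ssum 2 = 0 := by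
  rw [Ssum, Finset.sum_range_succ, Finset.sum_range_succ, Finset.sum_range_succ,
    Finset.sum_range_zero, gbinom_of_lt (show 2-2 < 2 by omega)]
  have : gbinom (2-1) 1 = 1 := gbinom_self 1
  rw [this]
  simp [gbinom_zero_right]

lemma hex (m : ℕ) (h : m % 3 ≠ 2) : (m+3)*(m+2)/6 = m*(m-1)/6 + (m+1) := by
  have h2 : 2 ∣ m*(m-1) := by
    cases m with
    | zero => simp
    | succ j =>
        obtain ⟨c, hc⟩ := Nat.even_mul_succ_self j
        have : (j+1)*(j+1-1) = j*(j+1) := by simp only [Nat.add_sub_cancel]; ring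
        omega
  have h3 : 3 ∣ m*(m-1) := by
    have hlt : m % 3 = 0 ∨ m % 3 = 1 := by omega
    rcases hlt with h0|h0
    · exact Dvd.dvd.mul_right (Nat.dvd_of_mod_eq_zero h0) _
    · exact Dvd.dvd.mul_left (Nat.dvd_of_mod_eq_zero (by omega)) _
  have h6 : 6 ∣ m*(m-1) := Nat.Coprime.mul_dvd_of_dvd_of_dvd (by norm_num) h2 h3
  have key : (m+3)*(m+2) = m*(m-1) + 6*(m+1) := by
    cases m with
    | zero => norm_num
    | succ j => simp only [Nat.add_sub_cancel]; ring
  omega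

lemma key_lemma : ∀ n, Ssum n =
    if n % 3 = 2 then 0
    else if n % 3 = 0 then (-1 : Polynomial ℤ) ^ n * X ^ (n * (n - 1) / 6)
    else -((-1 : Polynomial ℤ) ^ n * X ^ (n * (n - 1) / 6)) := by
  intro n
  induction n using Nat.strong_induction_on with
  | _ n ih =>
    match n, ih with
    | 0, _ => simpa using Ssum_zero
    | 1, _ => simpa using Ssum_one
    | 2, _ => simpa using Ssum_two
    | (m+3), ih =>
        rw [step3 m, ih m (by omega)]
        have hm : (m+3) % 3 = m % 3 := by omega
        have hsgn : (-1:Polynomial ℤ)^(m+3) = -(-1)^m := by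
          rw [pow_add]; ring
        by_cases h2 : m % 3 = 2
        · rw [hm, if_pos h2, if_pos h2]
          simp
        · have hx : (X:Polynomial ℤ)^((m+3)*(m+3-1)/6) = X^(m*(m-1)/6) * X^(m+1) := by
            rw [← pow_add]; congr 1
            rw [show m+3-1 = m+2 by omega]
            exact hex m h2
          by_cases h0 : m % 3 = 0
          · rw [hm, if_neg h2, if_neg h2, if_pos h0, if_pos h0, hsgn, hx]
            ring
          · rw [hm, if_neg h2, if_neg h2, if_neg h0, if_neg h0, hsgn, hx]
            ring

/-- `∑_{k≥0} (-1)^k q^(k(k-1)/2) [n-k, k]_q` equals `0` if `n ≡ 2 (mod 3)`,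
`(-1)^n q^(n(n-1)/6)` if `n ≡ 0 (mod 3)`, and `-(-1)^n q^(n(n-1)/6)` if `n ≡ 1 (mod 3)`. -/
theorem stmt_6 (n : ℕ) :
    (∑ k ∈ Finset.range (n + 1),
        (-1 : Polynomial ℤ) ^ k * Polynomial.X ^ (k * (k - 1) / 2) * gbinom (n - k) k) =
      if n % 3 = 2 then 0
      else if n % 3 = 0 then (-1 : Polynomial ℤ) ^ n * Polynomial.X ^ (n * (n - 1) / 6)
      else -((-1 : Polynomial ℤ) ^ n * Polynomial.X ^ (n * (n - 1) / 6)) := by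
  exact key_lemma n
end
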